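/- arXiv:1911.12160 — 3 statements merged into one kernel-verified Lean document; each statement's English description precedes it below -/
import Mathlib

section
/- Fix α > 0 and define f(v) = α√(1+αv) + v^{-α/2}√(1+αv) for v > 0. Then f is strictly decreasing on (0,1) and strictly increasing on (1,∞); in particular f(v) > f(1) for all v > 0 with v ≠ 1. -/
open Real Set

/-!
Writing `p = v ^ (-α/2)`, the derivative of `f` is
`α / (2 √(1 + α v) v) · (α v (1 - p) + p (v - 1))`.
For `v < 1` we have `p > 1`, so both summands of the last factor are negative; for `v > 1` we
have `0 < p < 1`, so both are positive. Hence `f` decreases on `(0, 1]` and increases on `[1, ∞)`.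
-/

noncomputable section

def sqrtRpowFun (α v : ℝ) : ℝ := α * √(1 + α * v) + v ^ (-(α / 2)) * √(1 + α * v)

def sqrtRpowFunDeriv (α v : ℝ) : ℝ :=
  α / (2 * √(1 + α * v) * v) * (α * v * (1 - v ^ (-(α / 2))) + v ^ (-(α / 2)) * (v - 1))

end

theorem hasDerivAt_sqrtRpowFun {α v : ℝ} (hv : 0 < v) (hs : 0 < 1 + α * v) :
    HasDerivAt (sqrtRpowFun α) (sqrtRpowFunDeriv α v) v := by
  have hlin : HasDerivAt (fun v : ℝ => 1 + α * v) α v := by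
    simpa using ((hasDerivAt_id v).const_mul α).const_add 1
  have hsqrt : HasDerivAt (fun v : ℝ => √(1 + α * v)) (1 / (2 * √(1 + α * v)) * α) v :=
    (hasDerivAt_sqrt hs.ne').comp v hlin
  have hrpow : HasDerivAt (fun v : ℝ => v ^ (-(α / 2))) (-(α / 2) * v ^ (-(α / 2) - 1)) v :=
    hasDerivAt_rpow_const (Or.inl hv.ne')
  refine ((hsqrt.const_mul α).add (hrpow.mul hsqrt)).congr_deriv ?_
  have hr : 0 < √(1 + α * v) := sqrt_pos.mpr hs
  have hr2 : √(1 + α * v) * √(1 + α * v) = 1 + α * v := mul_self_sqrt hs.le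
  rw [sqrtRpowFunDeriv, rpow_sub_one hv.ne']
  field_simp
  linear_combination (-(α * v ^ (-(α / 2)))) * hr2

theorem sqrtRpowFunDeriv_neg {α v : ℝ} (hα : 0 < α) (hv₀ : 0 < v) (hv₁ : v < 1) :
    sqrtRpowFunDeriv α v < 0 := by
  have hp : 1 < v ^ (-(α / 2)) := one_lt_rpow_of_pos_of_lt_one_of_neg hv₀ hv₁ (by linarith)
  have hr : 0 < √(1 + α * v) := sqrt_pos.mpr (by positivity)
  refine mul_neg_of_pos_of_neg (div_pos hα (by positivity)) ?_
  nlinarith [mul_pos (mul_pos hα hv₀) (sub_pos.2 hp),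
    mul_pos (zero_lt_one.trans hp) (sub_pos.2 hv₁)]

theorem sqrtRpowFunDeriv_pos {α v : ℝ} (hα : 0 < α) (hv : 1 < v) :
    0 < sqrtRpowFunDeriv α v := by
  have hv₀ : 0 < v := zero_lt_one.trans hv
  have hp : v ^ (-(α / 2)) < 1 := rpow_lt_one_of_one_lt_of_neg hv (by linarith)
  have hp₀ : 0 < v ^ (-(α / 2)) := rpow_pos_of_pos hv₀ _
  have hr : 0 < √(1 + α * v) := sqrt_pos.mpr (by positivity)
  refine mul_pos (div_pos hα (by positivity)) ?_
  nlinarith [mul_pos (mul_pos hα hv₀) (sub_pos.2 hp), mul_pos hp₀ (sub_pos.2 hv)]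

theorem continuousOn_sqrtRpowFun {α : ℝ} (hα : 0 < α) : ContinuousOn (sqrtRpowFun α) (Ioi 0) :=
  fun v (hv : 0 < v) => (hasDerivAt_sqrtRpowFun hv (by positivity)).continuousAt.continuousWithinAt

theorem strictAntiOn_sqrtRpowFun {α : ℝ} (hα : 0 < α) : StrictAntiOn (sqrtRpowFun α) (Ioc 0 1) :=
  strictAntiOn_of_hasDerivWithinAt_neg (convex_Ioc 0 1)
    ((continuousOn_sqrtRpowFun hα).mono Ioc_subset_Ioi_self)
    (fun v hv => by
      rw [interior_Ioc] at hv
      exact (hasDerivAt_sqrtRpowFun hv.1 (by nlinarith [hv.1])).hasDerivWithinAt)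
    (fun v hv => by
      rw [interior_Ioc] at hv
      exact sqrtRpowFunDeriv_neg hα hv.1 hv.2)

theorem strictMonoOn_sqrtRpowFun {α : ℝ} (hα : 0 < α) : StrictMonoOn (sqrtRpowFun α) (Ici 1) :=
  strictMonoOn_of_hasDerivWithinAt_pos (convex_Ici 1)
    ((continuousOn_sqrtRpowFun hα).mono fun _ hv => zero_lt_one.trans_le (mem_Ici.mp hv))
    (fun v hv => by
      rw [interior_Ici] at hv
      have hv₀ : 0 < v := zero_lt_one.trans hv
      exact (hasDerivAt_sqrtRpowFun hv₀ (by positivity)).hasDerivWithinAt)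
    (fun v hv => by
      rw [interior_Ici] at hv
      exact sqrtRpowFunDeriv_pos hα hv)

/-- For fixed `α > 0`, `f(v) = α√(1+αv) + v^(-α/2)√(1+αv)` is strictly decreasing
on `(0,1)`, strictly increasing on `(1,∞)`, and `f(v) > f(1)` for `v > 0`, `v ≠ 1`. -/
theorem stmt_3 (α : ℝ) (hα : 0 < α)
    (f : ℝ → ℝ)
    (hf : ∀ v, f v = α * Real.sqrt (1 + α * v) + v ^ (-(α / 2)) * Real.sqrt (1 + α * v)) :
    StrictAntiOn f (Set.Ioo (0 : ℝ) 1) ∧ StrictMonoOn f (Set.Ioi (1 : ℝ)) ∧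
      ∀ v : ℝ, 0 < v → v ≠ 1 → f 1 < f v := by
  obtain rfl : f = sqrtRpowFun α := funext hf
  have hanti := strictAntiOn_sqrtRpowFun hα
  have hmono := strictMonoOn_sqrtRpowFun hα
  refine ⟨hanti.mono Ioo_subset_Ioc_self, hmono.mono Ioi_subset_Ici_self, fun v hv hne => ?_⟩
  rcases hne.lt_or_gt with h | h
  · exact hanti ⟨hv, h.le⟩ (right_mem_Ioc.mpr zero_lt_one) h
  · exact hmono self_mem_Ici h.le h
end

section
/- For α ≥ 0 and two probability densities f₁, f₂ on a measure space, the density power divergence d_α(f₁,f₂) = ∫ [f₂^{1+α} − (1 + 1/α) f₂^α f₁ + (1/α) f₁^{1+α}] dμ (for α > 0) is nonnegative, and equals zero if f₁ = f₂ almost everywhere. -/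
open MeasureTheory

/-- The integrand of `d_α(f₁, f₂)` at a point where `f₁ = a` and `f₂ = b`. -/
noncomputable def dpdIntegrand (α a b : ℝ) : ℝ :=
  b ^ (1 + α) - (1 + 1 / α) * b ^ α * a + (1 / α) * a ^ (1 + α)

theorem mul_rpow_le_rpow_one_add {α a b : ℝ} (hα : 0 < α) (ha : 0 ≤ a) (hb : 0 ≤ b) :
    a * b ^ α ≤ a ^ (1 + α) / (1 + α) + α / (1 + α) * b ^ (1 + α) := by
  have hpq : (1 + α).HolderConjugate ((1 + α) / α) := by
    rw [Real.holderConjugate_iff_eq_conjExponent (by linarith), add_sub_cancel_left]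
  have hpow : (b ^ α) ^ ((1 + α) / α) = b ^ (1 + α) := by
    rw [← Real.rpow_mul hb, mul_div_cancel₀ _ hα.ne']
  calc a * b ^ α ≤ a ^ (1 + α) / (1 + α) + (b ^ α) ^ ((1 + α) / α) / ((1 + α) / α) :=
        Real.young_inequality_of_nonneg ha (Real.rpow_nonneg hb α) hpq
    _ = a ^ (1 + α) / (1 + α) + α / (1 + α) * b ^ (1 + α) := by
        rw [hpow]; field_simp

theorem dpdIntegrand_nonneg {α a b : ℝ} (hα : 0 < α) (ha : 0 ≤ a) (hb : 0 ≤ b) :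
    0 ≤ dpdIntegrand α a b := by
  have hyoung := mul_rpow_le_rpow_one_add hα ha hb
  have hscale : (1 + 1 / α) * (a ^ (1 + α) / (1 + α) + α / (1 + α) * b ^ (1 + α))
      = b ^ (1 + α) + (1 / α) * a ^ (1 + α) := by
    field_simp; ring
  have hscaled := mul_le_mul_of_nonneg_left hyoung (by positivity : (0 : ℝ) ≤ 1 + 1 / α)
  unfold dpdIntegrand
  linarith

theorem dpdIntegrand_self {α b : ℝ} (hα : 0 < α) (hb : 0 ≤ b) : dpdIntegrand α b b = 0 := by
  have hpow : b ^ (1 + α) = b * b ^ α := Real.rpow_one_add' hb (by linarith)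
  unfold dpdIntegrand
  rw [hpow]
  field_simp
  ring

theorem stmt_6_general {X : Type*} [MeasurableSpace X] (μ : Measure X)
    (α : ℝ) (hα : 0 < α) (f₁ f₂ : X → ℝ)
    (hf₁ : ∀ x, 0 ≤ f₁ x) (hf₂ : ∀ x, 0 ≤ f₂ x) :
    0 ≤ ∫ x, (f₂ x ^ (1 + α) - (1 + 1 / α) * f₂ x ^ α * f₁ x + (1 / α) * f₁ x ^ (1 + α)) ∂μ ∧
      (f₁ =ᵐ[μ] f₂ →
        ∫ x, (f₂ x ^ (1 + α) - (1 + 1 / α) * f₂ x ^ α * f₁ x + (1 / α) * f₁ x ^ (1 + α)) ∂μ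
          = 0) := by
  refine ⟨integral_nonneg fun x => dpdIntegrand_nonneg hα (hf₁ x) (hf₂ x), fun h => ?_⟩
  have hzero : (fun x => dpdIntegrand α (f₁ x) (f₂ x)) =ᵐ[μ] 0 := by
    filter_upwards [h] with x hx
    rw [hx, Pi.zero_apply, dpdIntegrand_self hα (hf₂ x)]
  exact integral_eq_zero_of_ae hzero

/-- For `α > 0` and probability densities `f₁, f₂` on a σ-finite measure space, the
density power divergence `∫ [f₂^{1+α} − (1+1/α) f₂^α f₁ + (1/α) f₁^{1+α}] dμ` is
nonnegative, and it equals zero if `f₁ = f₂` almost everywhere. -/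
theorem stmt_6 {X : Type*} [MeasurableSpace X] (μ : Measure X) [SigmaFinite μ]
    (α : ℝ) (hα : 0 < α) (f₁ f₂ : X → ℝ)
    (hf₁m : Measurable f₁) (hf₂m : Measurable f₂)
    (hf₁ : ∀ x, 0 ≤ f₁ x) (hf₂ : ∀ x, 0 ≤ f₂ x)
    (hint₁ : ∫ x, f₁ x ∂μ = 1) (hint₂ : ∫ x, f₂ x ∂μ = 1) :
    0 ≤ ∫ x, (f₂ x ^ (1 + α) - (1 + 1 / α) * f₂ x ^ α * f₁ x + (1 / α) * f₁ x ^ (1 + α)) ∂μ ∧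
      (f₁ =ᵐ[μ] f₂ →
        ∫ x, (f₂ x ^ (1 + α) - (1 + 1 / α) * f₂ x ^ α * f₁ x + (1 / α) * f₁ x ^ (1 + α)) ∂μ
          = 0) :=
  stmt_6_general μ α hα f₁ f₂ hf₁ hf₂
end

section
/- Let Q : ℝᵖ → ℝ be twice continuously differentiable with a critical point θ̂ (∇Q(θ̂) = 0), and suppose −∇²Q(θ̂) is positive definite with smallest eigenvalue λ > 0. If additionally the third derivatives of Q are bounded by M on the ball B(θ̂, δ) and δ < 3λ/(2M p^{3/2}), then for all θ ∈ B(θ̂, δ), Q(θ) − Q(θ̂) ≤ −(λ/4)‖θ − θ̂‖². -/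
/-!
Restrict `Q` to the segment `t ↦ θ̂ + t(θ - θ̂)`. The third derivative of this one-variable
function is a cubic form in `θ - θ̂`, bounded by `M (√p ‖θ - θ̂‖)³` through the coordinate
bounds, so integrating three times gives the second-order Taylor bound
`Q θ - Q θ̂ ≤ -(λ/2)‖θ - θ̂‖² + (M/6) p^{3/2} ‖θ - θ̂‖³`.
The choice of `δ` makes the cubic term at most `(λ/4)‖θ - θ̂‖²`.
-/

open Metric Set Finset

open scoped ContDiff

theorem image_le_of_hasDerivAt_le_hasDerivAt {f f' B B' : ℝ → ℝ} {a b : ℝ}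
    (hf : ∀ t ∈ Icc a b, HasDerivAt f (f' t) t) (hB : ∀ t ∈ Icc a b, HasDerivAt B (B' t) t)
    (ha : f a ≤ B a) (bound : ∀ t ∈ Icc a b, f' t ≤ B' t) :
    ∀ t ∈ Icc a b, f t ≤ B t := fun _ ht =>
  image_le_of_deriv_right_le_deriv_boundary
    (fun s hs => (hf s hs).continuousAt.continuousWithinAt)
    (fun s hs => (hf s (Ico_subset_Icc_self hs)).hasDerivWithinAt) ha
    (fun s hs => (hB s hs).continuousAt.continuousWithinAt)
    (fun s hs => (hB s (Ico_subset_Icc_self hs)).hasDerivWithinAt)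
    (fun s hs => bound s (Ico_subset_Icc_self hs)) ht

theorem le_taylor_two_add_of_third_deriv_le {g g' g'' g''' : ℝ → ℝ} {K : ℝ}
    (hg : ∀ t ∈ Icc (0 : ℝ) 1, HasDerivAt g (g' t) t)
    (hg' : ∀ t ∈ Icc (0 : ℝ) 1, HasDerivAt g' (g'' t) t)
    (hg'' : ∀ t ∈ Icc (0 : ℝ) 1, HasDerivAt g'' (g''' t) t)
    (hK : ∀ t ∈ Icc (0 : ℝ) 1, g''' t ≤ K) :
    g 1 ≤ g 0 + g' 0 + g'' 0 / 2 + K / 6 := by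
  have hid := fun t : ℝ => hasDerivAt_id' t
  have hg''_le : ∀ t ∈ Icc (0 : ℝ) 1, g'' t ≤ g'' 0 + K * t :=
    image_le_of_hasDerivAt_le_hasDerivAt hg''
      (fun t _ => ((hid t).const_mul K).const_add _) (by simp) (by simpa using hK)
  have hg'_le : ∀ t ∈ Icc (0 : ℝ) 1, g' t ≤ g' 0 + g'' 0 * t + K / 2 * t ^ 2 :=
    image_le_of_hasDerivAt_le_hasDerivAt hg'
      (fun t _ => (((hid t).const_mul (g'' 0)).const_add (g' 0)).fun_add
          ((hasDerivAt_pow 2 t).const_mul (K / 2)))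
      (by simp) (fun t ht => (hg''_le t ht).trans_eq (by ring))
  have hg_le : ∀ t ∈ Icc (0 : ℝ) 1,
      g t ≤ g 0 + g' 0 * t + g'' 0 / 2 * t ^ 2 + K / 6 * t ^ 3 :=
    image_le_of_hasDerivAt_le_hasDerivAt hg
      (fun t _ => ((((hid t).const_mul (g' 0)).const_add (g 0)).fun_add
          ((hasDerivAt_pow 2 t).const_mul (g'' 0 / 2))).fun_add
          ((hasDerivAt_pow 3 t).const_mul (K / 6)))
      (by simp) (fun t ht => (hg'_le t ht).trans_eq (by ring))
  simpa using hg_le 1 (right_mem_Icc.2 zero_le_one)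

section Line

variable {E F : Type*} [NormedAddCommGroup E] [NormedSpace ℝ E]
  [NormedAddCommGroup F] [NormedSpace ℝ F]

theorem hasDerivAt_iteratedFDeriv_apply_line {f : E → F} {n : ℕ∞ω} {k : ℕ} {x v : E} {t : ℝ}
    (hf : ContDiffAt ℝ n f (x + t • v)) (hk : (k : ℕ∞ω) < n) :
    HasDerivAt (fun s : ℝ => iteratedFDeriv ℝ k f (x + s • v) (fun _ => v))
      (iteratedFDeriv ℝ (k + 1) f (x + t • v) (fun _ => v)) t := by
  have hline : HasDerivAt (fun s : ℝ => x + s • v) v t := by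
    simpa using ((hasDerivAt_id' t).smul_const v).const_add x
  have hcomp := (hf.differentiableAt_iteratedFDeriv hk).hasFDerivAt.comp_hasDerivAt t hline
  exact (ContinuousMultilinearMap.apply ℝ (fun _ => E) F (fun _ => v)).hasFDerivAt
    |>.comp_hasDerivAt t hcomp

theorem le_taylor_two_add_of_iteratedFDeriv_three_le {f : E → ℝ} {s : Set E} (hs : IsOpen s)
    (hf : ContDiffOn ℝ 3 f s) {x v : E} (hseg : ∀ t ∈ Icc (0 : ℝ) 1, x + t • v ∈ s) {K : ℝ}
    (hK : ∀ t ∈ Icc (0 : ℝ) 1, iteratedFDeriv ℝ 3 f (x + t • v) (fun _ => v) ≤ K) :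
    f (x + v) ≤ f x + fderiv ℝ f x v + iteratedFDeriv ℝ 2 f x (fun _ => v) / 2 + K / 6 := by
  have hderiv (k : ℕ) (hk : k < 3) (t : ℝ) (ht : t ∈ Icc (0 : ℝ) 1) :=
    hasDerivAt_iteratedFDeriv_apply_line (hf.contDiffAt (hs.mem_nhds (hseg t ht)))
      (k := k) (by exact_mod_cast hk)
  simpa using le_taylor_two_add_of_third_deriv_le (hderiv 0 (by norm_num)) (hderiv 1 (by norm_num))
    (hderiv 2 (by norm_num)) hK

end Line

theorem mul_lt_of_lt_of_lt_div {a b r δ : ℝ} (ha : 0 ≤ a) (hr : 0 ≤ r) (hrδ : r < δ)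
    (hδ : δ < b / a) : a * r < b := by
  rcases ha.eq_or_lt with rfl | ha
  · rw [div_zero] at hδ
    linarith
  · calc a * r ≤ a * δ := by gcongr
      _ < b := (lt_div_iff₀' ha).1 hδ

section Euclidean

variable {ι : Type*} [Fintype ι]

theorem EuclideanSpace.sum_abs_le_sqrt_card_mul_norm (v : EuclideanSpace ℝ ι) :
    ∑ j, |v j| ≤ √(Fintype.card ι) * ‖v‖ := by
  simpa [EuclideanSpace.norm_eq] using Real.sum_mul_le_sqrt_mul_sqrt univ (fun _ => 1) (|v ·|)

theorem ContinuousMultilinearMap.abs_apply_const_le_of_abs_apply_single_le {n : ℕ}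
    [DecidableEq ι] (T : ContinuousMultilinearMap ℝ (fun _ : Fin n => EuclideanSpace ℝ ι) ℝ)
    {C : ℝ}
    (hC : ∀ r : Fin n → ι, |T (fun i => EuclideanSpace.single (r i) 1)| ≤ C)
    (v : EuclideanSpace ℝ ι) :
    |T (fun _ => v)| ≤ C * (∑ j, |v j|) ^ n := by
  have hv : v = ∑ j, v j • EuclideanSpace.single j 1 := by
    simpa using ((EuclideanSpace.basisFun ι ℝ).sum_repr v).symm
  calc |T (fun _ => v)|
      = |∑ r : Fin n → ι, (∏ i, v (r i)) * T (fun i => EuclideanSpace.single (r i) 1)| := by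
        nth_rw 1 [hv]
        rw [T.map_sum]
        simp only [T.map_smul_univ, smul_eq_mul]
    _ ≤ ∑ r : Fin n → ι, (∏ i, |v (r i)|) * C := by
        refine (abs_sum_le_sum_abs _ _).trans (sum_le_sum fun r _ => ?_)
        rw [abs_mul, abs_prod]
        exact mul_le_mul_of_nonneg_left (hC r) (by positivity)
    _ = C * ∏ _i : Fin n, ∑ j, |v j| := by
        rw [Fintype.prod_sum, mul_sum]
        exact sum_congr rfl fun r _ => mul_comm _ _
    _ = C * (∑ j, |v j|) ^ n := by
        rw [prod_const, card_univ, Fintype.card_fin]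

end Euclidean

theorem stmt_19_general (p : ℕ) (Q : EuclideanSpace ℝ (Fin p) → ℝ)
    (θhat : EuclideanSpace ℝ (Fin p)) (lam M δ : ℝ)
    (hM : 0 < M)
    (hQ : ContDiffOn ℝ 3 Q (Metric.ball θhat δ))
    (hcrit : fderiv ℝ Q θhat = 0)
    (hHess : ∀ v : EuclideanSpace ℝ (Fin p),
      lam * ‖v‖ ^ 2 ≤ -(iteratedFDeriv ℝ 2 Q θhat ![v, v]))
    (hthird : ∀ θ ∈ Metric.ball θhat δ, ∀ j k l : Fin p,
      |iteratedFDeriv ℝ 3 Q θ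
        ![EuclideanSpace.single j (1 : ℝ), EuclideanSpace.single k (1 : ℝ),
          EuclideanSpace.single l (1 : ℝ)]| ≤ M)
    (hδ : δ < 3 * lam / (2 * M * (p : ℝ) ^ ((3 : ℝ) / 2))) :
    ∀ θ ∈ Metric.ball θhat δ, Q θ - Q θhat ≤ -(lam / 4) * ‖θ - θhat‖ ^ 2 := by
  intro θ hθ
  set v := θ - θhat
  have hvδ : ‖v‖ < δ := by rwa [mem_ball, dist_eq_norm] at hθ
  have hseg : ∀ t ∈ Icc (0 : ℝ) 1, θhat + t • v ∈ ball θhat δ := fun t ht => by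
    rw [mem_ball, dist_eq_norm, add_sub_cancel_left, norm_smul, Real.norm_of_nonneg ht.1]
    nlinarith [norm_nonneg v, ht.2]
  have hsingle (r : Fin 3 → Fin p) : (fun i => EuclideanSpace.single (r i) (1 : ℝ)) =
      ![EuclideanSpace.single (r 0) 1, EuclideanSpace.single (r 1) 1,
        EuclideanSpace.single (r 2) 1] := by
    ext1 i; fin_cases i <;> rfl
  have hcubic (t : ℝ) (ht : t ∈ Icc (0 : ℝ) 1) :
      iteratedFDeriv ℝ 3 Q (θhat + t • v) (fun _ => v) ≤ M * (√p * ‖v‖) ^ 3 :=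
    calc _ ≤ M * (∑ j, |v j|) ^ 3 :=
          (le_abs_self _).trans <|
            ContinuousMultilinearMap.abs_apply_const_le_of_abs_apply_single_le _
              (fun r => hsingle r ▸ hthird _ (hseg t ht) _ _ _) v
      _ ≤ M * (√p * ‖v‖) ^ 3 := by
          gcongr
          simpa using EuclideanSpace.sum_abs_le_sqrt_card_mul_norm v
  have htaylor := le_taylor_two_add_of_iteratedFDeriv_three_le isOpen_ball hQ hseg hcubic
  rw [add_sub_cancel, hcrit, zero_apply] at htaylor
  have hHess' : lam * ‖v‖ ^ 2 ≤ -iteratedFDeriv ℝ 2 Q θhat (fun _ => v) := by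
    have hdiag : ![v, v] = fun _ => v := by ext1 i; fin_cases i <;> rfl
    simpa [hdiag] using hHess v
  have hsmall : 2 * M * √p ^ 3 * ‖v‖ < 3 * lam := by
    refine mul_lt_of_lt_of_lt_div (by positivity) (norm_nonneg v) hvδ ?_
    rwa [Real.rpow_div_two_eq_sqrt _ (Nat.cast_nonneg p), Real.rpow_ofNat] at hδ
  linarith [mul_le_mul_of_nonneg_right hsmall.le (sq_nonneg ‖v‖)]

/-- Local quadratic domination: if `Q` is `C³` near a critical point `θ̂`, the negative
Hessian at `θ̂` has smallest eigenvalue `≥ λ > 0`, the third partial derivatives are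
bounded by `M` on `B(θ̂,δ)`, and `δ < 3λ/(2Mp^{3/2})`, then
`Q(θ) − Q(θ̂) ≤ −(λ/4)‖θ−θ̂‖²` on `B(θ̂,δ)`. -/
theorem stmt_19 (p : ℕ) (Q : EuclideanSpace ℝ (Fin p) → ℝ)
    (θhat : EuclideanSpace ℝ (Fin p)) (lam M δ : ℝ)
    (hlam : 0 < lam) (hM : 0 < M) (hδ0 : 0 < δ)
    (hQ : ContDiffOn ℝ 3 Q (Metric.ball θhat δ))
    (hcrit : fderiv ℝ Q θhat = 0)
    (hHess : ∀ v : EuclideanSpace ℝ (Fin p),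
      lam * ‖v‖ ^ 2 ≤ -(iteratedFDeriv ℝ 2 Q θhat ![v, v]))
    (hthird : ∀ θ ∈ Metric.ball θhat δ, ∀ j k l : Fin p,
      |iteratedFDeriv ℝ 3 Q θ
        ![EuclideanSpace.single j (1 : ℝ), EuclideanSpace.single k (1 : ℝ),
          EuclideanSpace.single l (1 : ℝ)]| ≤ M)
    (hδ : δ < 3 * lam / (2 * M * (p : ℝ) ^ ((3 : ℝ) / 2))) :
    ∀ θ ∈ Metric.ball θhat δ, Q θ - Q θhat ≤ -(lam / 4) * ‖θ - θhat‖ ^ 2 :=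
  stmt_19_general p Q θhat lam M δ hM hQ hcrit hHess hthird hδ
end
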